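/- Let {w_k} have correlation bound Γ_w ≻ 0 for A, let Γ_{k+1} = A Γ_k Aᵀ + Γ_w with Γ_0 = 0, and define sets ℛ_0 = {0}, ℛ_{k+1} = A·ℛ_k + 𝔹(Γ_w, r) for r > 0. Then 𝔹(Γ_k, r) ⊆ ℛ_k for all k ≥ 1. -/

import Mathlib

/-!
Let `𝔹 = {u | uᵀ u ≤ r}`. If `S Sᵀ = A (B Bᵀ) Aᵀ + T Tᵀ` with `S` invertible, every point of `S 𝔹`
is `S Sᵀ y = A B (Bᵀ Aᵀ y) + T (Tᵀ y)` for some `y`, and `|Bᵀ Aᵀ y|² + |Tᵀ y|² = yᵀ S Sᵀ y = |Sᵀ y|²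
≤ r`, so `S 𝔹 ⊆ A B 𝔹 + T 𝔹`. For the symmetric square roots of `Γ_{k+1} = A Γ_k Aᵀ + Γ_w`, which
is invertible because `Γ_w ≻ 0`, this reads `𝔹(Γ_{k+1}, r) ⊆ A 𝔹(Γ_k, r) + 𝔹(Γ_w, r)`; induction
from `𝔹(0, r) ⊆ {0} = ℛ_0` then gives `𝔹(Γ_k, r) ⊆ ℛ_k` for every `k`.
-/

open Matrix MeasureTheory Pointwise

/-- The matrix of expectations `E[z wᵀ]`, entrywise. -/
noncomputable def covE {n : ℕ} {Ω : Type*} [MeasurableSpace Ω] (μ : Measure Ω)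
    (z w : Ω → Fin n → ℝ) : Matrix (Fin n) (Fin n) ℝ :=
  Matrix.of fun i j => ∫ ω, z ω i * w ω j ∂μ

/-- The Loewner order on real matrices: `A ⪯ B` iff `B - A` is positive semidefinite. -/
def LoeLE {n : ℕ} (A B : Matrix (Fin n) (Fin n) ℝ) : Prop := (B - A).PosSemidef

/-- The square root of a positive semidefinite matrix, as defined in the older Mathlib
(`Matrix.PosSemidef.sqrt`, removed since). -/
noncomputable def Matrix.PosSemidef.sqrt {n : ℕ} {Γ : Matrix (Fin n) (Fin n) ℝ}
    (hA : Γ.PosSemidef) : Matrix (Fin n) (Fin n) ℝ :=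
  hA.1.eigenvectorUnitary.1 * diagonal ((↑) ∘ (√·) ∘ hA.1.eigenvalues) *
    (star hA.1.eigenvectorUnitary : Matrix (Fin n) (Fin n) ℝ)

/-- The ellipsoid `𝔹(Γ, r) = {x = Γ^{1/2} z : zᵀ z ≤ r}` for a PSD matrix `Γ`. -/
noncomputable def ball {n : ℕ} (Γ : Matrix (Fin n) (Fin n) ℝ)
    (hΓ : Γ.PosSemidef) (r : ℝ) : Set (Fin n → ℝ) :=
  {x | ∃ z : Fin n → ℝ, x = hΓ.sqrt *ᵥ z ∧ z ⬝ᵥ z ≤ r}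

namespace Matrix

section DotProduct

variable {ι : Type*} [Fintype ι]

lemma dotProduct_self_nonneg (v : ι → ℝ) : 0 ≤ v ⬝ᵥ v :=
  Finset.sum_nonneg fun i _ => mul_self_nonneg (v i)

lemma mulVec_dotProduct_mulVec_self (N : Matrix ι ι ℝ) (y : ι → ℝ) :
    (N *ᵥ y) ⬝ᵥ (N *ᵥ y) = y ⬝ᵥ ((Nᵀ * N) *ᵥ y) := by
  rw [← mulVec_mulVec, mulVec_transpose, dotProduct_mulVec, dotProduct_comm]

lemma image_mulVec_subset_add [DecidableEq ι] {A B T S : Matrix ι ι ℝ} (hS : IsUnit S)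
    (h : S * Sᵀ = A * (B * Bᵀ) * Aᵀ + T * Tᵀ) (r : ℝ) :
    (S *ᵥ ·) '' {u | u ⬝ᵥ u ≤ r} ⊆
      (A *ᵥ ·) '' ((B *ᵥ ·) '' {z | z ⬝ᵥ z ≤ r}) + (T *ᵥ ·) '' {z | z ⬝ᵥ z ≤ r} := by
  rintro _ ⟨u, hu : u ⬝ᵥ u ≤ r, rfl⟩
  obtain ⟨y, rfl⟩ := mulVec_surjective_iff_isUnit.mpr ((isUnit_transpose S).mpr hS) u
  have h_norm : ((Bᵀ * Aᵀ) *ᵥ y) ⬝ᵥ ((Bᵀ * Aᵀ) *ᵥ y) + (Tᵀ *ᵥ y) ⬝ᵥ (Tᵀ *ᵥ y) =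
      (Sᵀ *ᵥ y) ⬝ᵥ (Sᵀ *ᵥ y) := by
    simp only [mulVec_dotProduct_mulVec_self, ← dotProduct_add, ← add_mulVec, transpose_mul,
      transpose_transpose, h, Matrix.mul_assoc]
  have := dotProduct_self_nonneg ((Bᵀ * Aᵀ) *ᵥ y)
  have := dotProduct_self_nonneg (Tᵀ *ᵥ y)
  refine ⟨_, ⟨_, ⟨(Bᵀ * Aᵀ) *ᵥ y, ?_, rfl⟩, rfl⟩, _, ⟨Tᵀ *ᵥ y, ?_, rfl⟩, ?_⟩
  · show _ ≤ r; linarith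
  · show _ ≤ r; linarith
  · simp only [mulVec_mulVec, ← add_mulVec, h, Matrix.mul_assoc]

end DotProduct

namespace PosSemidef

variable {n : ℕ} {Γ : Matrix (Fin n) (Fin n) ℝ}

lemma sqrt_transpose (hΓ : Γ.PosSemidef) : hΓ.sqrtᵀ = hΓ.sqrt :=
  (PosSemidef.mul_mul_conjTranspose_same
    (posSemidef_diagonal_iff.mpr fun i => Real.sqrt_nonneg (hΓ.1.eigenvalues i)) _).1

lemma sqrt_mul_self (hΓ : Γ.PosSemidef) : hΓ.sqrt * hΓ.sqrt = Γ := by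
  set U := hΓ.1.eigenvectorUnitary
  have hD : (diagonal ((↑) ∘ (√·) ∘ hΓ.1.eigenvalues) : Matrix (Fin n) (Fin n) ℝ) *
      diagonal ((↑) ∘ (√·) ∘ hΓ.1.eigenvalues) = diagonal (RCLike.ofReal ∘ hΓ.1.eigenvalues) := by
    rw [diagonal_mul_diagonal]
    congr 1
    funext i
    simp [Real.mul_self_sqrt (hΓ.eigenvalues_nonneg i)]
  have hU : (star U : Matrix (Fin n) (Fin n) ℝ) * U.1 = 1 := UnitaryGroup.star_mul_self U
  conv_rhs => rw [hΓ.1.spectral_theorem, Unitary.conjStarAlgAut_apply, ← hD]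
  simp only [PosSemidef.sqrt, Matrix.mul_assoc]
  rw [← Matrix.mul_assoc (star (U : Matrix (Fin n) (Fin n) ℝ)) U.1, hU, Matrix.one_mul]

end PosSemidef

end Matrix

section Ball

variable {n : ℕ}

lemma ball_eq_image {Γ : Matrix (Fin n) (Fin n) ℝ} (hΓ : Γ.PosSemidef) (r : ℝ) :
    ball Γ hΓ r = (hΓ.sqrt *ᵥ ·) '' {z | z ⬝ᵥ z ≤ r} :=
  Set.ext fun _ => exists_congr fun _ =>
    ⟨fun ⟨hx, hz⟩ => ⟨hz, hx.symm⟩, fun ⟨hz, hx⟩ => ⟨hx.symm, hz⟩⟩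

lemma ball_congr {Γ Γ' : Matrix (Fin n) (Fin n) ℝ} (h : Γ = Γ') (hΓ : Γ.PosSemidef)
    (hΓ' : Γ'.PosSemidef) (r : ℝ) : ball Γ hΓ r = ball Γ' hΓ' r := by
  subst h; rfl

lemma ball_zero_subset (h : (0 : Matrix (Fin n) (Fin n) ℝ).PosSemidef) (r : ℝ) :
    ball 0 h r ⊆ {0} := by
  rintro _ ⟨z, rfl, -⟩
  rw [Set.mem_singleton_iff, ← dotProduct_self_eq_zero, mulVec_dotProduct_mulVec_self,
    h.sqrt_transpose, h.sqrt_mul_self, zero_mulVec, dotProduct_zero]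

lemma ball_mul_mul_transpose_add_subset {A Γ W : Matrix (Fin n) (Fin n) ℝ} (hΓ : Γ.PosSemidef)
    (hW : W.PosSemidef) (hM : (A * Γ * Aᵀ + W).PosDef) (r : ℝ) :
    ball (A * Γ * Aᵀ + W) hM.posSemidef r ⊆ (A *ᵥ ·) '' ball Γ hΓ r + ball W hW r := by
  have hS : IsUnit hM.posSemidef.sqrt :=
    isUnit_of_mul_isUnit_left (hM.posSemidef.sqrt_mul_self ▸ hM.isUnit)
  have h : hM.posSemidef.sqrt * hM.posSemidef.sqrtᵀ =
      A * (hΓ.sqrt * hΓ.sqrtᵀ) * Aᵀ + hW.sqrt * hW.sqrtᵀ := by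
    simp only [PosSemidef.sqrt_transpose, PosSemidef.sqrt_mul_self]
  simp only [ball_eq_image]
  exact image_mulVec_subset_add hS h r

end Ball

theorem stmt_8_general {n : ℕ}
    (A Γw : Matrix (Fin n) (Fin n) ℝ) (hΓw : Γw.PosDef)
    (Γ : ℕ → Matrix (Fin n) (Fin n) ℝ)
    (hΓ0 : Γ 0 = 0) (hΓrec : ∀ k, Γ (k + 1) = A * Γ k * Aᵀ + Γw)
    (hΓpsd : ∀ k, (Γ k).PosSemidef)
    (r : ℝ)
    (R : ℕ → Set (Fin n → ℝ))
    (hR0 : R 0 = {0})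
    (hRrec : ∀ k, R (k + 1) = (A *ᵥ ·) '' R k + ball Γw hΓw.posSemidef r) :
    ∀ k, 1 ≤ k → ball (Γ k) (hΓpsd k) r ⊆ R k := by
  suffices h : ∀ k, ball (Γ k) (hΓpsd k) r ⊆ R k from fun k _ => h k
  intro k
  induction k with
  | zero =>
    rw [ball_congr hΓ0 _ PosSemidef.zero, hR0]
    exact ball_zero_subset _ r
  | succ k ih =>
    have hM : (A * Γ k * Aᵀ + Γw).PosDef :=
      hΓw.posSemidef_add ((hΓpsd k).mul_mul_conjTranspose_same A)
    rw [ball_congr (hΓrec k) _ hM.posSemidef, hRrec k]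
    exact (ball_mul_mul_transpose_add_subset (hΓpsd k) hΓw.posSemidef hM r).trans
      (Set.add_subset_add_right (Set.image_mono ih))

/-- with a correlation bound `Γ_w ≻ 0`, `Γ_{k+1} = A Γ_k Aᵀ + Γ_w`, `Γ_0 = 0`,
`ℛ_0 = {0}` and `ℛ_{k+1} = A ℛ_k + 𝔹(Γ_w, r)`, one has `𝔹(Γ_k, r) ⊆ ℛ_k` for `k ≥ 1`. -/
theorem stmt_8 {n : ℕ} {Ω : Type*} [MeasurableSpace Ω] (μ : Measure Ω)
    [IsProbabilityMeasure μ]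
    (A Γw : Matrix (Fin n) (Fin n) ℝ) (hΓw : Γw.PosDef)
    (w z : ℕ → Ω → Fin n → ℝ)
    (hz0 : ∀ ω, z 0 ω = 0)
    (hzrec : ∀ k ω, z (k + 1) ω = A *ᵥ z k ω + w k ω)
    (hcb : ∀ k, LoeLE
      (A * covE μ (z k) (w k) + covE μ (w k) (z k) * Aᵀ + covE μ (w k) (w k)) Γw)
    (Γ : ℕ → Matrix (Fin n) (Fin n) ℝ)
    (hΓ0 : Γ 0 = 0) (hΓrec : ∀ k, Γ (k + 1) = A * Γ k * Aᵀ + Γw)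
    (hΓpsd : ∀ k, (Γ k).PosSemidef)
    (r : ℝ) (hr : 0 < r)
    (R : ℕ → Set (Fin n → ℝ))
    (hR0 : R 0 = {0})
    (hRrec : ∀ k, R (k + 1) = (A *ᵥ ·) '' R k + ball Γw hΓw.posSemidef r) :
    ∀ k, 1 ≤ k → ball (Γ k) (hΓpsd k) r ⊆ R k :=
  stmt_8_general A Γw hΓw Γ hΓ0 hΓrec hΓpsd r R hR0 hRrec
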